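/- Monitorability transfer for ⊓ over ∀-formulas: for sHML formulas ψ₁, ψ₂ with violation-complete regular monitors m₁, m₂, the monitor ⋀[m₁]_k ∧ ⋀[m₂]_k rejects T if and only if some trace of T violates ψ₁ or some trace of T violates ψ₂, whenever m₁ and m₂ are also sound; hence this monitor rejects T iff T ⊭ (∀π ψ₁ ⊓ ∀π ψ₂). -/
import Mathlib


inductive Verdict where
  | yes | no | end_ | inc
deriving DecidableEq

def pref {Act : Type} (t : ℕ → Act) (n : ℕ) : List Act :=
  (List.range n).map t

theorem stmt17
    (Act : Type)
    (SatPsi₁ SatPsi₂ : (ℕ → Act) → Prop)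
    (v₁ v₂ : List Act → Verdict)
    (persistent₁ : ∀ w u, v₁ w ≠ Verdict.inc → v₁ (w ++ u) = v₁ w)
    (persistent₂ : ∀ w u, v₂ w ≠ Verdict.inc → v₂ (w ++ u) = v₂ w)
    (sound₁ : ∀ t : ℕ → Act, (∃ n, v₁ (pref t n) = Verdict.no) → ¬ SatPsi₁ t)
    (sound₂ : ∀ t : ℕ → Act, (∃ n, v₂ (pref t n) = Verdict.no) → ¬ SatPsi₂ t)
    (vc₁ : ∀ t : ℕ → Act, ¬ SatPsi₁ t → ∃ n, v₁ (pref t n) = Verdict.no)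
    (vc₂ : ∀ t : ℕ → Act, ¬ SatPsi₂ t → ∃ n, v₂ (pref t n) = Verdict.no)
    (T : Set (ℕ → Act)) (hfin : T.Finite)
    : ((∃ t ∈ T, ∃ n, v₁ (pref t n) = Verdict.no) ∨
       (∃ t ∈ T, ∃ n, v₂ (pref t n) = Verdict.no)) ↔
      ¬ ((∀ t ∈ T, SatPsi₁ t) ∧ (∀ t ∈ T, SatPsi₂ t))
    := by
  constructor
  · rintro (⟨t, ht, hn⟩ | ⟨t, ht, hn⟩) ⟨h1, h2⟩
    · exact sound₁ t hn (h1 t ht)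
    · exact sound₂ t hn (h2 t ht)
  · intro h
    by_contra hc
    push_neg at hc
    apply h
    constructor
    · intro t ht
      by_contra hs
      obtain ⟨n, hn⟩ := vc₁ t hs
      exact absurd hn (hc.1 t ht n)
    · intro t ht
      by_contra hs
      obtain ⟨n, hn⟩ := vc₂ t hs
      exact absurd hn (hc.2 t ht n)
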